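/- Fix an integer d ≥ 1, T > 0, and functions b, σ : {1,…,d} × ℝ → ℝ satisfying |b(i,x)−b(i,y)| + |σ(i,x)−σ(i,y)| ≤ K|x−y| and |b(i,x)| + |σ(i,x)| ≤ K(1+|x|) for some K > 0 and all i, x, y. Then for every ν ∈ 𝕄_T with kernel K_ν there exists φ ∈ ℍ_T such that φ'(t) = Σ_{i=1}^d b(i, φ(t)) K_ν(t,i) for Lebesgue-almost every t ∈ [0,T]; moreover for this φ one has ∫₀ᵀ sup_{λ∈ℝ} [ λ(φ'(t) − b̂(ν,φ(t))(t)) − (λ²/2) σ̂²(ν,φ(t))(t) ] dt = 0, and consequently the infimum over φ ∈ ℍ_T of this functional equals 0. -/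

import Mathlib

/-!
Mixing the drifts `b(i, ·)` with the weights `K(s, i)` gives a vector field
`F(s, x) = ∑ᵢ b(i, x) K(s, i)` that is measurable in `s` and, uniformly in `s`, `C`-Lipschitz and
of linear growth in `x`. Picard iteration on `C([0,T], ℝ)` then yields a continuous `φ` with
`φ(t) = ∫₀ᵗ F(s, φ(s)) ds`: the `n`-th iterate is `(CT)ⁿ/n!`-Lipschitz, so some iterate is a
contraction. Along `φ` the derivative `F(s, φ(s))` is bounded, so `φ ∈ ℍ_T`, and the integrand of
the rate function reduces to `sup_λ (-λ² σ̂² / 2) = 0`.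
-/

open MeasureTheory
open scoped ENNReal

/-- A kernel on `[0,T] × {1,…,d}`. -/
def IsMKernel (d : ℕ) (T : ℝ) (K : ℝ → Fin d → ℝ) : Prop :=
  (∀ i : Fin d, Measurable fun s => K s i) ∧
    ∀ s ∈ Set.Icc (0:ℝ) T, (∀ i : Fin d, 0 ≤ K s i) ∧ ∑ i : Fin d, K s i = 1

/-- `φ ∈ ℍ_T`: `φ` is absolutely continuous with `φ(0)=0` and derivative `φd` which is
measurable and square-integrable on `[0,T]`. -/
def MemHT (T : ℝ) (φ φd : ℝ → ℝ) : Prop :=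
  φ 0 = 0 ∧ Measurable φd ∧ IntegrableOn (fun s => (φd s) ^ 2) (Set.Icc (0:ℝ) T) ∧
    ∀ t ∈ Set.Icc (0:ℝ) T, φ t = ∫ s in (0:ℝ)..t, φd s

/-- The nonnegative functional
`∫₀ᵀ sup_{λ∈ℝ} [ λ(φ'(t) − b̂(ν,φ(t))) − (λ²/2) σ̂²(ν,φ(t)) ] dt`,
expressed through the kernel `K` of `ν`, as a Lebesgue integral with values in `[0,∞]`. -/
noncomputable def Ifun (d : ℕ) (T : ℝ) (b σ : Fin d → ℝ → ℝ) (φ φd : ℝ → ℝ)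
    (K : ℝ → Fin d → ℝ) : ℝ≥0∞ :=
  ∫⁻ t in Set.Ioc (0:ℝ) T,
    ⨆ lam : ℝ, ENNReal.ofReal
      (lam * (φd t - ∑ i : Fin d, b i (φ t) * K t i)
        - lam ^ 2 / 2 * ∑ i : Fin d, (σ i (φ t)) ^ 2 * K t i)

open Set

/-- Measurability in `s` is only asked along continuous paths: that is all Picard iteration
needs. -/
structure IsCaratheodoryLipschitz (T C : ℝ) (F : ℝ → ℝ → ℝ) : Prop where
  measurable_comp : ∀ g : ℝ → ℝ, Continuous g → Measurable fun s => F s (g s)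
  abs_sub_le : ∀ s ∈ Icc 0 T, ∀ x y, |F s x - F s y| ≤ C * |x - y|
  abs_le : ∀ s ∈ Icc 0 T, ∀ x, |F s x| ≤ C * (1 + |x|)

namespace IsCaratheodoryLipschitz

variable {T C : ℝ} {F : ℝ → ℝ → ℝ}

lemma const_nonneg (hF : IsCaratheodoryLipschitz T C F) (hT : 0 ≤ T) : 0 ≤ C := by
  simpa using (abs_nonneg _).trans (hF.abs_sub_le 0 ⟨le_rfl, hT⟩ 1 0)

lemma exists_bound_comp (hF : IsCaratheodoryLipschitz T C F) {g : ℝ → ℝ} (hg : Continuous g) :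
    ∃ M, ∀ s ∈ Icc 0 T, |F s (g s)| ≤ M := by
  obtain ⟨M, hM⟩ :=
    (isCompact_Icc (a := 0) (b := T)).exists_bound_of_continuousOn hg.continuousOn
  refine ⟨C * (1 + M), fun s hs => (hF.abs_le s hs _).trans ?_⟩
  have := hF.const_nonneg (hs.1.trans hs.2)
  gcongr
  exact hM s hs

lemma integrableOn_comp (hF : IsCaratheodoryLipschitz T C F) {g : ℝ → ℝ} (hg : Continuous g) :
    IntegrableOn (fun s => F s (g s)) (Icc 0 T) := by
  obtain ⟨M, hM⟩ := hF.exists_bound_comp hg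
  refine Measure.integrableOn_of_bounded (M := M) measure_Icc_lt_top.ne
    (hF.measurable_comp g hg).aestronglyMeasurable ?_
  filter_upwards [ae_restrict_mem measurableSet_Icc] with s hs
  exact hM s hs

noncomputable def picard (hF : IsCaratheodoryLipschitz T C F) (hT : 0 ≤ T)
    (f : C(Icc 0 T, ℝ)) : C(Icc 0 T, ℝ) where
  toFun t := ∫ s in (0 : ℝ)..t, F s (IccExtend hT f s)
  continuous_toFun := by
    have h := intervalIntegral.continuousOn_primitive_interval (a := 0) (b := T) (μ := volume)
      (by rw [uIcc_of_le hT]; exact hF.integrableOn_comp (f.continuous.Icc_extend' (h := hT)))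
    rw [uIcc_of_le hT] at h
    exact h.comp_continuous continuous_subtype_val Subtype.mem

lemma picard_apply (hF : IsCaratheodoryLipschitz T C F) (hT : 0 ≤ T) (f : C(Icc 0 T, ℝ))
    (t : Icc 0 T) : hF.picard hT f t = ∫ s in (0 : ℝ)..t, F s (IccExtend hT f s) :=
  rfl

lemma abs_picard_sub_le (hF : IsCaratheodoryLipschitz T C F) (hT : 0 ≤ T)
    (f g : C(Icc 0 T, ℝ)) (t : Icc 0 T) :
    |hF.picard hT f t - hF.picard hT g t|
      ≤ ∫ s in (0 : ℝ)..t, C * |IccExtend hT f s - IccExtend hT g s| := by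
  have hf := f.continuous.Icc_extend' (h := hT)
  have hg := g.continuous.Icc_extend' (h := hT)
  have hint : ∀ {u : ℝ → ℝ}, Continuous u →
      IntervalIntegrable (fun s => F s (u s)) volume 0 t := fun hu =>
    (intervalIntegrable_iff_integrableOn_Icc_of_le t.2.1).2
      ((hF.integrableOn_comp hu).mono_set (Icc_subset_Icc_right t.2.2))
  rw [picard_apply, picard_apply, ← intervalIntegral.integral_sub (hint hf) (hint hg)]
  refine (intervalIntegral.abs_integral_le_integral_abs t.2.1).trans ?_
  refine intervalIntegral.integral_mono_on t.2.1 ((hint hf).sub (hint hg)).abs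
    ((continuous_const.mul (hf.sub hg).abs).intervalIntegrable _ _) fun s hs => ?_
  exact hF.abs_sub_le s ⟨hs.1, hs.2.trans t.2.2⟩ _ _

lemma abs_picard_iterate_sub_le (hF : IsCaratheodoryLipschitz T C F) (hT : 0 ≤ T) (n : ℕ)
    (f g : C(Icc 0 T, ℝ)) (t : Icc 0 T) :
    |(hF.picard hT)^[n] f t - (hF.picard hT)^[n] g t|
      ≤ C ^ n * (t : ℝ) ^ n / n.factorial * dist f g := by
  induction n generalizing t with
  | zero => simpa [Real.dist_eq] using ContinuousMap.dist_apply_le_dist (f := f) (g := g) t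
  | succ n ih =>
    rw [Function.iterate_succ_apply', Function.iterate_succ_apply']
    refine (abs_picard_sub_le hF hT _ _ t).trans ?_
    have hC := hF.const_nonneg hT
    calc ∫ s in (0 : ℝ)..t, C * |IccExtend hT ((hF.picard hT)^[n] f) s
            - IccExtend hT ((hF.picard hT)^[n] g) s|
        ≤ ∫ s in (0 : ℝ)..t, C ^ (n + 1) / n.factorial * dist f g * s ^ n := by
          refine intervalIntegral.integral_mono_on t.2.1
            ((continuous_const.mul (((hF.picard hT)^[n] f).continuous.Icc_extend'.sub
              ((hF.picard hT)^[n] g).continuous.Icc_extend').abs).intervalIntegrable _ _)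
            ((continuous_const.mul (continuous_pow n)).intervalIntegrable _ _) fun s hs => ?_
          have hs' : s ∈ Icc 0 T := ⟨hs.1, hs.2.trans t.2.2⟩
          rw [IccExtend_of_mem _ _ hs', IccExtend_of_mem _ _ hs']
          calc _ ≤ C * (C ^ n * s ^ n / n.factorial * dist f g) := by
                gcongr; exact ih ⟨s, hs'⟩
            _ = _ := by ring
      _ = C ^ (n + 1) * (t : ℝ) ^ (n + 1) / (n + 1).factorial * dist f g := by
          rw [intervalIntegral.integral_const_mul, integral_pow, Nat.factorial_succ]
          push_cast
          field_simp
          ring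

lemma dist_picard_iterate_le (hF : IsCaratheodoryLipschitz T C F) (hT : 0 ≤ T) (n : ℕ)
    (f g : C(Icc 0 T, ℝ)) :
    dist ((hF.picard hT)^[n] f) ((hF.picard hT)^[n] g)
      ≤ (C * T) ^ n / n.factorial * dist f g := by
  have hC := hF.const_nonneg hT
  refine (ContinuousMap.dist_le (by positivity)).2 fun t => ?_
  rw [Real.dist_eq, mul_pow]
  refine (abs_picard_iterate_sub_le hF hT n f g t).trans ?_
  have ht := t.2
  gcongr
  exacts [ht.1, ht.2]

/-- Since `(CT)ⁿ/n! → 0`, some iterate of the Picard map is a contraction. -/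
lemma exists_contractingWith_picard_iterate (hF : IsCaratheodoryLipschitz T C F)
    (hT : 0 ≤ T) : ∃ (N : ℕ) (q : NNReal), ContractingWith q (hF.picard hT)^[N] := by
  obtain ⟨N, hN⟩ := ((FloorSemiring.tendsto_pow_div_factorial_atTop (C * T)).eventually
    (gt_mem_nhds zero_lt_one)).exists
  have hq : 0 ≤ (C * T) ^ N / N.factorial := by have := hF.const_nonneg hT; positivity
  exact ⟨N, ⟨_, hq⟩, hN, LipschitzWith.of_dist_le_mul (dist_picard_iterate_le hF hT N)⟩

theorem exists_eq_integral (hF : IsCaratheodoryLipschitz T C F) (hT : 0 ≤ T) :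
    ∃ φ : ℝ → ℝ, Continuous φ ∧ ∀ t ∈ Icc 0 T, φ t = ∫ s in (0 : ℝ)..t, F s (φ s) := by
  obtain ⟨N, q, hq⟩ := hF.exists_contractingWith_picard_iterate hT
  have hfix := hq.isFixedPt_fixedPoint_iterate
  set f := ContractingWith.fixedPoint _ hq
  refine ⟨IccExtend hT f, f.continuous.Icc_extend', fun t ht => ?_⟩
  rw [IccExtend_of_mem hT f ht]
  exact (DFunLike.congr_fun hfix _).symm

end IsCaratheodoryLipschitz

lemma abs_sum_mul_le_of_sum_eq_one {ι : Type*} [Fintype ι] {a w : ι → ℝ} {M : ℝ}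
    (hw : ∀ i, 0 ≤ w i) (hw_sum : ∑ i, w i = 1) (ha : ∀ i, |a i| ≤ M) :
    |∑ i, a i * w i| ≤ M :=
  calc |∑ i, a i * w i| ≤ ∑ i, |a i| * w i :=
        (Finset.abs_sum_le_sum_abs _ _).trans_eq
          (Finset.sum_congr rfl fun i _ => by rw [abs_mul, abs_of_nonneg (hw i)])
    _ ≤ ∑ i, M * w i := by gcongr with i; exacts [hw i, ha i]
    _ = M := by rw [← Finset.mul_sum, hw_sum, mul_one]

lemma isCaratheodoryLipschitz_sum_mul_kernel {d : ℕ} {T C : ℝ} {b : Fin d → ℝ → ℝ}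
    {K : ℝ → Fin d → ℝ} (hK : IsMKernel d T K)
    (hb_lip : ∀ i x y, |b i x - b i y| ≤ C * |x - y|)
    (hb_growth : ∀ i x, |b i x| ≤ C * (1 + |x|)) :
    IsCaratheodoryLipschitz T C fun s x => ∑ i, b i x * K s i where
  measurable_comp g hg := by
    have hb : ∀ i, Continuous (b i) := fun i =>
      (LipschitzWith.of_dist_le' fun x y => by
        simpa only [Real.dist_eq] using hb_lip i x y).continuous
    exact Finset.measurable_sum _ fun i _ => ((hb i).comp hg).measurable.mul (hK.1 i)
  abs_sub_le s hs x y := by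
    rw [← Finset.sum_sub_distrib]
    simp_rw [← sub_mul]
    exact abs_sum_mul_le_of_sum_eq_one (hK.2 s hs).1 (hK.2 s hs).2 fun i => hb_lip i x y
  abs_le s hs x :=
    abs_sum_mul_le_of_sum_eq_one (hK.2 s hs).1 (hK.2 s hs).2 fun i => hb_growth i x

lemma memHT_of_eq_integral {T : ℝ} {φ φd : ℝ → ℝ} (hT : 0 ≤ T)
    (hφ : ∀ t ∈ Icc 0 T, φ t = ∫ s in (0 : ℝ)..t, φd s) (hφd : Measurable φd)
    {M : ℝ} (hM : ∀ s ∈ Icc 0 T, |φd s| ≤ M) : MemHT T φ φd := by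
  refine ⟨by simpa using hφ 0 ⟨le_rfl, hT⟩, hφd, ?_, hφ⟩
  refine Measure.integrableOn_of_bounded (M := M ^ 2) measure_Icc_lt_top.ne
    (hφd.pow_const 2).aestronglyMeasurable ?_
  filter_upwards [ae_restrict_mem measurableSet_Icc] with s hs
  rw [norm_pow, Real.norm_eq_abs]
  exact pow_le_pow_left₀ (abs_nonneg _) (hM s hs) 2

/-- Along a solution of `φ' = b̂(ν, φ)` the integrand is `sup_λ (-λ² σ̂² / 2) = 0`. -/
lemma Ifun_eq_zero_of_ae_eq {d : ℕ} {T : ℝ} {b σ : Fin d → ℝ → ℝ} {φ φd : ℝ → ℝ}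
    {K : ℝ → Fin d → ℝ} (hK : IsMKernel d T K)
    (hφd : ∀ᵐ t ∂(volume.restrict (Icc (0 : ℝ) T)), φd t = ∑ i, b i (φ t) * K t i) :
    Ifun d T b σ φ φd K = 0 := by
  refine (setLIntegral_congr_fun_ae measurableSet_Ioc ?_).trans lintegral_zero
  filter_upwards [ae_imp_of_ae_restrict hφd] with t ht ht_mem
  have hK_nonneg := (hK.2 t (Ioc_subset_Icc_self ht_mem)).1
  rw [ht (Ioc_subset_Icc_self ht_mem), sub_self, ENNReal.iSup_eq_zero]
  intro lam
  rw [ENNReal.ofReal_eq_zero, mul_zero, zero_sub, neg_nonpos]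
  exact mul_nonneg (by positivity)
    (Finset.sum_nonneg fun i _ => mul_nonneg (sq_nonneg _) (hK_nonneg i))

theorem exists_zero_of_rate_function_general (d : ℕ) (T : ℝ) (hT : 0 < T)
    (b σ : Fin d → ℝ → ℝ) (C : ℝ)
    (hlip : ∀ i : Fin d, ∀ x y : ℝ,
      |b i x - b i y| + |σ i x - σ i y| ≤ C * |x - y|)
    (hgrowth : ∀ i : Fin d, ∀ x : ℝ, |b i x| + |σ i x| ≤ C * (1 + |x|))
    (K : ℝ → Fin d → ℝ) (hK : IsMKernel d T K) :
    (∃ φ φd : ℝ → ℝ, MemHT T φ φd ∧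
      (∀ᵐ t ∂(volume.restrict (Set.Icc (0:ℝ) T)),
        φd t = ∑ i : Fin d, b i (φ t) * K t i) ∧
      Ifun d T b σ φ φd K = 0) ∧
    (⨅ p : {p : (ℝ → ℝ) × (ℝ → ℝ) // MemHT T p.1 p.2},
      Ifun d T b σ p.1.1 p.1.2 K) = 0 := by
  have hF := isCaratheodoryLipschitz_sum_mul_kernel hK
    (fun i x y => (le_add_of_nonneg_right (abs_nonneg _)).trans (hlip i x y))
    (fun i x => (le_add_of_nonneg_right (abs_nonneg _)).trans (hgrowth i x))
  obtain ⟨φ, hφ_cont, hφ⟩ := hF.exists_eq_integral hT.le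
  set φd : ℝ → ℝ := fun s => ∑ i, b i (φ s) * K s i
  obtain ⟨M, hM⟩ := hF.exists_bound_comp hφ_cont
  have hmem : MemHT T φ φd := memHT_of_eq_integral hT.le hφ (hF.measurable_comp φ hφ_cont) hM
  have hode : ∀ᵐ t ∂(volume.restrict (Icc (0 : ℝ) T)), φd t = ∑ i, b i (φ t) * K t i :=
    ae_of_all _ fun _ => rfl
  have hzero : Ifun d T b σ φ φd K = 0 := Ifun_eq_zero_of_ae_eq hK hode
  exact ⟨⟨φ, φd, hmem, hode, hzero⟩,
    le_antisymm (iInf_le_of_le ⟨(φ, φd), hmem⟩ hzero.le) bot_le⟩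

/-- For Lipschitz, linearly growing `b, σ` and every `ν ∈ 𝕄_T` with kernel `K`, there
exists `φ ∈ ℍ_T` with `φ'(t) = ∑_i b(i,φ(t)) K(t,i)` for a.e. `t ∈ [0,T]`; for this
`φ` the functional `∫₀ᵀ sup_{λ∈ℝ}[λ(φ' − b̂) − (λ²/2)σ̂²] dt` vanishes, and
consequently its infimum over `φ ∈ ℍ_T` equals `0`. -/
theorem exists_zero_of_rate_function (d : ℕ) (hd : 1 ≤ d) (T : ℝ) (hT : 0 < T)
    (b σ : Fin d → ℝ → ℝ) (C : ℝ) (hC : 0 < C)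
    (hlip : ∀ i : Fin d, ∀ x y : ℝ,
      |b i x - b i y| + |σ i x - σ i y| ≤ C * |x - y|)
    (hgrowth : ∀ i : Fin d, ∀ x : ℝ, |b i x| + |σ i x| ≤ C * (1 + |x|))
    (K : ℝ → Fin d → ℝ) (hK : IsMKernel d T K) :
    (∃ φ φd : ℝ → ℝ, MemHT T φ φd ∧
      (∀ᵐ t ∂(volume.restrict (Set.Icc (0:ℝ) T)),
        φd t = ∑ i : Fin d, b i (φ t) * K t i) ∧
      Ifun d T b σ φ φd K = 0) ∧
    (⨅ p : {p : (ℝ → ℝ) × (ℝ → ℝ) // MemHT T p.1 p.2},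
      Ifun d T b σ p.1.1 p.1.2 K) = 0 :=
  exists_zero_of_rate_function_general d T hT b σ C hlip hgrowth K hK
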